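/- arXiv:1903.10781 — 2 statements merged into one kernel-verified Lean document; each statement's English description precedes it below -/
import Mathlib

section
/- Let λ₁ > 1, r₀ ∈ (0, 1), θ₀, δ, α₃ ∈ ℝ, α₂ ≥ 0, and α₁ ≠ 0. If f(s) = 0 for some s > 0, then there exists u ≥ s such that f⁺(u) = 0 or f⁻(u) = 0; i.e., if f has at least one positive solution then one of its enveloping curves f⁺ or f⁻ has at least one positive solution, and the least positive solution of f is bounded above by a positive solution of f⁺ or f⁻. -/
/-- For `λ₁ > 1`, `r₀ ∈ (0,1)`, `α₂ ≥ 0`, `α₁ ≠ 0`: if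
`f t = α₁ * λ₁ ^ t + 2 * α₂ * cos (t * θ₀ + δ) * r₀ ^ t + α₃` vanishes at some `s > 0`,
then there exists `u ≥ s` at which one of the enveloping curves
`f⁺ t = α₁ * λ₁ ^ t + 2 * α₂ * r₀ ^ t + α₃` or
`f⁻ t = α₁ * λ₁ ^ t - 2 * α₂ * r₀ ^ t + α₃` vanishes. -/
theorem stmt_11 (lam₁ r₀ θ₀ δ α₁ α₂ α₃ : ℝ)
    (hlam : 1 < lam₁) (hr₀ : r₀ ∈ Set.Ioo (0 : ℝ) 1) (hα₂ : 0 ≤ α₂) (hα₁ : α₁ ≠ 0)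
    (f fplus fminus : ℝ → ℝ)
    (hf : ∀ t : ℝ, f t = α₁ * lam₁ ^ t + 2 * α₂ * Real.cos (t * θ₀ + δ) * r₀ ^ t + α₃)
    (hfp : ∀ t : ℝ, fplus t = α₁ * lam₁ ^ t + 2 * α₂ * r₀ ^ t + α₃)
    (hfm : ∀ t : ℝ, fminus t = α₁ * lam₁ ^ t - 2 * α₂ * r₀ ^ t + α₃)
    (s : ℝ) (hs : 0 < s) (hzero : f s = 0) :
    ∃ u : ℝ, s ≤ u ∧ (fplus u = 0 ∨ fminus u = 0) := by
  obtain ⟨hr0, hr1⟩ := hr₀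
  have hlampos : (0:ℝ) < lam₁ := by linarith
  have hcontlam : Continuous fun t : ℝ => lam₁ ^ t := by
    have h : (fun t : ℝ => lam₁ ^ t) = fun t => Real.exp (t * Real.log lam₁) := by
      funext t; rw [Real.rpow_def_of_pos hlampos, mul_comm]
    rw [h]; exact Real.continuous_exp.comp (continuous_id.mul continuous_const)
  have hcontr : Continuous fun t : ℝ => r₀ ^ t := by
    have h : (fun t : ℝ => r₀ ^ t) = fun t => Real.exp (t * Real.log r₀) := by
      funext t; rw [Real.rpow_def_of_pos hr0, mul_comm]
    rw [h]; exact Real.continuous_exp.comp (continuous_id.mul continuous_const)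
  have hrs : (0:ℝ) ≤ r₀ ^ s := (Real.rpow_pos_of_pos hr0 s).le
  have hcos₁ : Real.cos (s * θ₀ + δ) ≤ 1 := Real.cos_le_one _
  have hcos₂ : -1 ≤ Real.cos (s * θ₀ + δ) := Real.neg_one_le_cos _
  have hfzero := hf s
  rw [hzero] at hfzero
  have hminus_le : fminus s ≤ 0 := by
    rw [hfm s]
    nlinarith [mul_le_mul_of_nonneg_left (mul_le_mul_of_nonneg_right hcos₂ hrs) hα₂]
  have hplus_ge : 0 ≤ fplus s := by
    rw [hfp s]
    nlinarith [mul_le_mul_of_nonneg_left (mul_le_mul_of_nonneg_right hcos₁ hrs) hα₂]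
  have htlam : Filter.Tendsto (fun t : ℝ => lam₁ ^ t) Filter.atTop Filter.atTop := by
    have h : (fun t : ℝ => lam₁ ^ t) = fun t => Real.exp (t * Real.log lam₁) := by
      funext t; rw [Real.rpow_def_of_pos hlampos, mul_comm]
    rw [h]
    exact Real.tendsto_exp_atTop.comp
      (Filter.tendsto_id.atTop_mul_const (Real.log_pos hlam))
  have hrle : ∀ t : ℝ, 0 ≤ t → r₀ ^ t ≤ 1 := fun t ht =>
    Real.rpow_le_one hr0.le hr1.le ht
  have hrpos : ∀ t : ℝ, 0 < r₀ ^ t := fun t => Real.rpow_pos_of_pos hr0 t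
  rcases hα₁.lt_or_gt with hneg | hpos
  · -- α₁ < 0 : use fplus, which tends to -∞
    have hcontp : Continuous fplus := by
      have h : fplus = fun t => α₁ * lam₁ ^ t + 2 * α₂ * r₀ ^ t + α₃ := funext hfp
      rw [h]
      exact ((continuous_const.mul hcontlam).add (continuous_const.mul hcontr)).add
        continuous_const
    have htendB : Filter.Tendsto (fun t : ℝ => α₁ * lam₁ ^ t) Filter.atTop Filter.atBot :=
      (Filter.tendsto_const_mul_atBot_of_neg hneg).2 htlam
    obtain ⟨T, hT1, hT2⟩ :=
      ((htendB.eventually_le_atBot (-(2 * α₂ + |α₃| + 1))).and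
        (Filter.eventually_ge_atTop s)).exists
    have hTle : fplus T ≤ 0 := by
      rw [hfp T]
      have h1 : r₀ ^ T ≤ 1 := hrle T (by linarith)
      have h2 : α₃ ≤ |α₃| := le_abs_self α₃
      nlinarith
    obtain ⟨u, hu, hufu⟩ := intermediate_value_Icc' hT2 hcontp.continuousOn
      (Set.mem_Icc.2 ⟨hTle, hplus_ge⟩)
    exact ⟨u, hu.1, Or.inl hufu⟩
  · -- α₁ > 0 : use fminus, which tends to +∞
    have hcontm : Continuous fminus := by
      have h : fminus = fun t => α₁ * lam₁ ^ t - 2 * α₂ * r₀ ^ t + α₃ := funext hfm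
      rw [h]
      exact ((continuous_const.mul hcontlam).sub (continuous_const.mul hcontr)).add
        continuous_const
    have htendT : Filter.Tendsto (fun t : ℝ => α₁ * lam₁ ^ t) Filter.atTop Filter.atTop :=
      (Filter.tendsto_const_mul_atTop_of_pos hpos).2 htlam
    obtain ⟨T, hT1, hT2⟩ :=
      ((htendT.eventually_ge_atTop (2 * α₂ + |α₃| + 1)).and
        (Filter.eventually_ge_atTop s)).exists
    have hTge : 0 ≤ fminus T := by
      rw [hfm T]
      have h1 : r₀ ^ T ≤ 1 := hrle T (by linarith)
      have h2 : -|α₃| ≤ α₃ := neg_abs_le α₃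
      nlinarith [hrpos T]
    obtain ⟨u, hu, hufu⟩ := intermediate_value_Icc hT2 hcontm.continuousOn
      (Set.mem_Icc.2 ⟨hminus_le, hTge⟩)
    exact ⟨u, hu.1, Or.inr hufu⟩
end

section
/- Let λ₁ > 1, r₀ ∈ (0, 1), θ₀, δ, α₂, α₃ ∈ ℝ, and α₁ ≠ 0. Then the set {t ∈ ℝ : t ≥ 0 and f(t) = 0} of nonnegative solutions of the border-return-time equation is finite. -/
open Real Set

lemma analyticAt_cos' (x : ℝ) : AnalyticAt ℝ Real.cos x := by
  have h : Real.cos = fun t : ℝ => (Complex.exp (t * Complex.I)).re := by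
    funext t
    simp [Complex.exp_mul_I, Complex.add_re, Complex.mul_re, Complex.cos_ofReal_re,
      Complex.sin_ofReal_im]
  rw [h]
  have h1 : AnalyticAt ℝ (fun t : ℝ => (t : ℂ)) x := Complex.ofRealCLM.analyticAt x
  have h2 : AnalyticAt ℝ (fun z : ℂ => Complex.exp (z * Complex.I)) (x : ℂ) :=
    (analyticAt_cexp.comp (analyticAt_id.mul analyticAt_const)).restrictScalars
  exact (Complex.reCLM.analyticAt _).comp (h2.comp h1)



/-- For `λ₁ > 1`, `r₀ ∈ (0,1)` and `α₁ ≠ 0`, the set of nonnegative solutions of the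
border-return-time equation `f t = 0`, where
`f t = α₁ * λ₁ ^ t + 2 * α₂ * cos (t * θ₀ + δ) * r₀ ^ t + α₃`, is finite. -/
theorem stmt_13 (lam₁ r₀ θ₀ δ α₁ α₂ α₃ : ℝ)
    (hlam : 1 < lam₁) (hr₀ : r₀ ∈ Set.Ioo (0 : ℝ) 1) (hα₁ : α₁ ≠ 0)
    (f : ℝ → ℝ)
    (hf : ∀ t : ℝ, f t = α₁ * lam₁ ^ t + 2 * α₂ * Real.cos (t * θ₀ + δ) * r₀ ^ t + α₃) :
    {t : ℝ | 0 ≤ t ∧ f t = 0}.Finite := by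
  have hlam0 : (0:ℝ) < lam₁ := lt_trans one_pos hlam
  -- analyticity
  have hA : AnalyticOnNhd ℝ f Set.univ := by
    intro x _
    have hfe : f = fun t => α₁ * Real.exp (Real.log lam₁ * t) +
        2 * α₂ * Real.cos (t * θ₀ + δ) * Real.exp (Real.log r₀ * t) + α₃ := by
      funext t
      rw [hf t, Real.rpow_def_of_pos hlam0, Real.rpow_def_of_pos hr₀.1]
    rw [hfe]
    exact ((analyticAt_const.mul ((analyticAt_const.mul analyticAt_id).rexp)).add
      (((analyticAt_const.mul ((analyticAt_cos' _).comp
        ((analyticAt_id.mul analyticAt_const).add analyticAt_const))).mul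
        ((analyticAt_const.mul analyticAt_id).rexp)))).add analyticAt_const
  -- bound on solutions
  set C : ℝ := (2 * |α₂| + |α₃| + 1) / |α₁| with hC
  have hTT : Filter.Tendsto (fun t : ℝ => lam₁ ^ t) Filter.atTop Filter.atTop := by
    simp_rw [Real.rpow_def_of_pos hlam0]
    exact Real.tendsto_exp_atTop.comp
      ((Filter.tendsto_const_mul_atTop_of_pos (Real.log_pos hlam)).mpr Filter.tendsto_id)
  obtain ⟨M, hM⟩ := (hTT.eventually (Filter.eventually_gt_atTop C)).exists_forall_of_atTop
  have hα₁' : (0:ℝ) < |α₁| := abs_pos.mpr hα₁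
  have key : ∀ t : ℝ, 0 ≤ t → max M 0 ≤ t → f t ≠ 0 := by
    intro t ht htM h0
    have h1 : C < lam₁ ^ t := hM t (le_trans (le_max_left _ _) htM)
    have h2 : 2 * |α₂| + |α₃| + 1 < |α₁| * lam₁ ^ t := by
      rw [hC, div_lt_iff₀ hα₁'] at h1; linarith [h1]
    have hcos : |Real.cos (t * θ₀ + δ)| ≤ 1 := Real.abs_cos_le_one _
    have hrp : (0:ℝ) < r₀ ^ t := Real.rpow_pos_of_pos hr₀.1 t
    have hr1 : r₀ ^ t ≤ 1 := Real.rpow_le_one hr₀.1.le hr₀.2.le ht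
    have hb : |2 * α₂ * Real.cos (t * θ₀ + δ) * r₀ ^ t| ≤ 2 * |α₂| := by
      rw [abs_mul, abs_mul, abs_mul]
      have : |(2:ℝ)| * |α₂| * |Real.cos (t * θ₀ + δ)| * |r₀ ^ t| ≤ |(2:ℝ)| * |α₂| * 1 * 1 := by
        apply mul_le_mul _ (by rwa [abs_of_pos hrp]) (abs_nonneg _) (by positivity)
        exact mul_le_mul_of_nonneg_left hcos (by positivity)
      simpa using this
    have hfa : |α₁ * lam₁ ^ t| = |α₁| * lam₁ ^ t := by
      rw [abs_mul, abs_of_pos (Real.rpow_pos_of_pos hlam0 t)]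
    have := hf t
    rw [h0] at this
    have h3 : |α₁ * lam₁ ^ t| ≤ |2 * α₂ * Real.cos (t * θ₀ + δ) * r₀ ^ t| + |α₃| := by
      have : α₁ * lam₁ ^ t = -(2 * α₂ * Real.cos (t * θ₀ + δ) * r₀ ^ t) + -α₃ := by linarith
      rw [this]
      exact (abs_add_le _ _).trans (by rw [abs_neg, abs_neg])
    rw [hfa] at h3
    linarith
  have hsub : {t : ℝ | 0 ≤ t ∧ f t = 0} ⊆ Set.Icc 0 (max M 0) := by
    rintro t ⟨ht, hft⟩
    refine ⟨ht, ?_⟩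
    by_contra hlt
    exact key t ht (le_of_not_ge hlt) hft
  by_contra hinf
  have hinf' : {t : ℝ | 0 ≤ t ∧ f t = 0}.Infinite := hinf
  obtain ⟨x₀, _, hacc⟩ := hinf'.exists_accPt_of_subset_isCompact isCompact_Icc hsub
  have hfreq : ∃ᶠ z in nhdsWithin x₀ {x₀}ᶜ, f z = 0 := by
    have : ∃ᶠ z in nhdsWithin x₀ {x₀}ᶜ, z ∈ {t : ℝ | 0 ≤ t ∧ f t = 0} :=
      Filter.frequently_mem_iff_neBot.mpr hacc
    exact this.mono fun z hz => hz.2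
  have := hA.eqOn_zero_of_preconnected_of_frequently_eq_zero isPreconnected_univ
    (Set.mem_univ x₀) hfreq
  have hz : f (max M 0) = 0 := this (Set.mem_univ _)
  exact key (max M 0) (le_max_right _ _) le_rfl hz
end
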